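/- arXiv:0806.2360 — 2 statements merged into one kernel-verified Lean document; each statement's English description precedes it below -/
import Mathlib

section
/- For the logarithmic spiral f(x) = (r₀ q^x cos(2πx), r₀ q^x sin(2πx)) with r₀ > 0 and q > 1, the angle at f(0) in the triangle with vertices the origin O, f(0), and f(x) tends to π/2 + arctan(ln q / (2π)) as x → 0⁺; in particular for small x > 0 the angle ∠O f(0) f(x) is obtuse. -/
open Real Filter EuclideanGeometry Topology

lemma arccos_aux (a b : ℝ) (hb : 0 < b) :
    Real.arccos (-a / Real.sqrt (a^2 + b^2)) = π / 2 + Real.arctan (a / b) := by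
  have h1 : Real.arctan (a / b) = Real.arcsin (a / Real.sqrt (a^2 + b^2)) := by
    rw [Real.arctan_eq_arcsin]
    congr 1
    rw [div_pow, one_add_div (by positivity : (b:ℝ)^2 ≠ 0), Real.sqrt_div (by positivity),
      Real.sqrt_sq hb.le]
    rw [add_comm (b^2)]
    field_simp
  rw [neg_div, Real.arccos_neg, Real.arccos_eq_pi_div_two_sub_arcsin, h1]
  ring

lemma angle_formula (u v : EuclideanSpace ℝ (Fin 2)) :
    InnerProductGeometry.angle u v =
      Real.arccos ((u 0 * v 0 + u 1 * v 1) /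
        (Real.sqrt ((u 0)^2 + (u 1)^2) * Real.sqrt ((v 0)^2 + (v 1)^2))) := by
  simp [InnerProductGeometry.angle, PiLp.inner_apply, EuclideanSpace.norm_eq,
    Fin.sum_univ_two, RCLike.inner_apply, conj_trivial, Real.norm_eq_abs, sq_abs]
  congr 2; ring

theorem log_spiral_angle_limit
    (r₀ q : ℝ) (hr : 0 < r₀) (hq : 1 < q)
    (f : ℝ → EuclideanSpace ℝ (Fin 2))
    (hf : ∀ x, f x = ![r₀ * q ^ x * Real.cos (2 * π * x),
                       r₀ * q ^ x * Real.sin (2 * π * x)]) :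
    Tendsto (fun x => EuclideanGeometry.angle (0 : EuclideanSpace ℝ (Fin 2)) (f 0) (f x))
      (nhdsWithin 0 (Set.Ioi 0))
      (nhds (π / 2 + Real.arctan (Real.log q / (2 * π)))) ∧
    ∀ᶠ x in nhdsWithin (0 : ℝ) (Set.Ioi 0),
      π / 2 < EuclideanGeometry.angle (0 : EuclideanSpace ℝ (Fin 2)) (f 0) (f x) := by
  have hq0 : (0:ℝ) < q := lt_trans one_pos hq
  have hL : 0 < Real.log q := Real.log_pos hq
  have hπ := Real.pi_pos
  set L := Real.log q with hLdef
  -- derivative facts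
  have hlin : HasDerivAt (fun x:ℝ => 2*π*x) (2*π) 0 := by
    simpa using (hasDerivAt_id (0:ℝ)).const_mul (2*π)
  have hrp : HasDerivAt (fun x:ℝ => q^x) (q^(0:ℝ) * L) 0 :=
    (Real.hasStrictDerivAt_const_rpow hq0 0).hasDerivAt
  have hgc : HasDerivAt (fun x:ℝ => q^x * Real.cos (2*π*x)) L 0 := by
    have := hrp.mul ((Real.hasDerivAt_cos (2*π*0)).comp 0 hlin)
    simp at this; exact this
  have hgs : HasDerivAt (fun x:ℝ => q^x * Real.sin (2*π*x)) (2*π) 0 := by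
    have := hrp.mul ((Real.hasDerivAt_sin (2*π*0)).comp 0 hlin)
    simp at this; exact this
  have hmono : 𝓝[>] (0:ℝ) ≤ 𝓝[≠] 0 :=
    nhdsWithin_mono 0 (fun y hy => Set.mem_compl_singleton_iff.mpr (ne_of_gt hy))
  have hA : Tendsto (fun x => (q^x * Real.cos (2*π*x) - 1)/x) (𝓝[>] (0:ℝ)) (𝓝 L) := by
    have h := (hasDerivAt_iff_tendsto_slope.mp hgc).mono_left hmono
    refine h.congr (fun x => ?_)
    simp [slope_def_field]
  have hB : Tendsto (fun x => (q^x * Real.sin (2*π*x))/x) (𝓝[>] (0:ℝ)) (𝓝 (2*π)) := by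
    have h := (hasDerivAt_iff_tendsto_slope.mp hgs).mono_left hmono
    refine h.congr (fun x => ?_)
    simp [slope_def_field]
  -- limit of the cosine ratio
  have hS : Tendsto (fun x => Real.sqrt (((q^x * Real.cos (2*π*x) - 1)/x)^2 +
        ((q^x * Real.sin (2*π*x))/x)^2)) (𝓝[>] (0:ℝ))
      (𝓝 (Real.sqrt (L^2 + (2*π)^2))) :=
    (Real.continuous_sqrt.tendsto _).comp ((hA.pow 2).add (hB.pow 2))
  have hsqrt_pos : (0:ℝ) < Real.sqrt (L^2 + (2*π)^2) := Real.sqrt_pos.2 (by positivity)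
  have hratio : Tendsto (fun x => -((q^x * Real.cos (2*π*x) - 1)/x) /
        Real.sqrt (((q^x * Real.cos (2*π*x) - 1)/x)^2 + ((q^x * Real.sin (2*π*x))/x)^2))
      (𝓝[>] (0:ℝ)) (𝓝 (-L / Real.sqrt (L^2 + (2*π)^2))) :=
    hA.neg.div hS (ne_of_gt hsqrt_pos)
  have hkey : Tendsto (fun x => Real.arccos (-((q^x * Real.cos (2*π*x) - 1)/x) /
        Real.sqrt (((q^x * Real.cos (2*π*x) - 1)/x)^2 + ((q^x * Real.sin (2*π*x))/x)^2)))
      (𝓝[>] (0:ℝ)) (𝓝 (Real.arccos (-L / Real.sqrt (L^2 + (2*π)^2)))) :=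
    (Real.continuous_arccos.tendsto _).comp hratio
  -- eventual equality of the geometric angle with the explicit formula
  have heq : ∀ᶠ x in 𝓝[>] (0:ℝ),
      Real.arccos (-((q^x * Real.cos (2*π*x) - 1)/x) /
        Real.sqrt (((q^x * Real.cos (2*π*x) - 1)/x)^2 + ((q^x * Real.sin (2*π*x))/x)^2)) =
      EuclideanGeometry.angle (0 : EuclideanSpace ℝ (Fin 2)) (f 0) (f x) := by
    filter_upwards [self_mem_nhdsWithin] with x hx
    have hx0 : (0:ℝ) < x := hx
    set A := q^x * Real.cos (2*π*x) - 1 with hAdef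
    set B := q^x * Real.sin (2*π*x) with hBdef
    have e0 : ((0 : EuclideanSpace ℝ (Fin 2)) - f 0) 0 = -r₀ := by
      simp [PiLp.sub_apply, hf, Real.rpow_zero]
    have e1 : ((0 : EuclideanSpace ℝ (Fin 2)) - f 0) 1 = 0 := by
      simp [PiLp.sub_apply, hf, Real.rpow_zero]
    have e2 : (f x - f 0) 0 = r₀ * A := by
      simp only [PiLp.sub_apply, hf, Matrix.cons_val_zero]
      simp [hAdef]
      ring
    have e3 : (f x - f 0) 1 = r₀ * B := by
      simp only [PiLp.sub_apply, hf, Matrix.cons_val_one, Matrix.head_cons]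
      simp [hBdef]
      ring
    rw [EuclideanGeometry.angle, vsub_eq_sub, vsub_eq_sub, angle_formula, e0, e1, e2, e3]
    congr 1
    set T := Real.sqrt (A^2 + B^2) with hTdef
    have hT0 : 0 ≤ A^2 + B^2 := by positivity
    have h1 : Real.sqrt ((-r₀)^2 + 0^2) = r₀ := by
      rw [neg_sq]; simp [Real.sqrt_sq hr.le]
    have h3 : Real.sqrt ((A/x)^2 + (B/x)^2) = T / x := by
      rw [show (A/x)^2 + (B/x)^2 = (A^2+B^2)/x^2 by ring, Real.sqrt_div hT0,
        Real.sqrt_sq hx0.le]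
    have h2 : Real.sqrt ((r₀*A)^2 + (r₀*B)^2) = r₀ * T := by
      rw [show (r₀*A)^2 + (r₀*B)^2 = r₀^2 * (A^2+B^2) by ring,
        Real.sqrt_mul (sq_nonneg r₀), Real.sqrt_sq hr.le]
    rw [h3, h1, h2]
    rw [show -(A/x) / (T/x) = -A/x/(T/x) by ring, div_div_div_comm,
      div_self (ne_of_gt hx0), div_one,
      show -r₀ * (r₀ * A) + 0 * (r₀ * B) = r₀^2 * (-A) by ring,
      show r₀ * (r₀ * T) = r₀^2 * T by ring,
      mul_div_mul_left _ _ (by positivity : r₀^2 ≠ 0)]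
  have hval : Real.arccos (-L / Real.sqrt (L^2 + (2*π)^2)) = π/2 + Real.arctan (L/(2*π)) :=
    arccos_aux L (2*π) (by positivity)
  have hmain : Tendsto (fun x => EuclideanGeometry.angle (0 : EuclideanSpace ℝ (Fin 2)) (f 0) (f x))
      (𝓝[>] (0:ℝ)) (𝓝 (π / 2 + Real.arctan (L / (2 * π)))) := by
    rw [← hval]
    exact Tendsto.congr' heq hkey
  refine ⟨hmain, ?_⟩
  have hlt : π/2 < π/2 + Real.arctan (L/(2*π)) := by
    have h := Real.arctan_strictMono (by positivity : (0:ℝ) < L/(2*π))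
    rw [Real.arctan_zero] at h
    linarith
  exact hmain.eventually (eventually_gt_nhds hlt)
end

section
/- Let a, b, c be points in ℝ² with a ≠ c, and suppose ⟨a − c, b − a⟩ < −l·|b − a| for some l > 0 (i.e., the edge direction b − a makes an obtuse angle with a − c of cosine less than −l/|a−c|). Then the open disk of radius r centered at a + t·M(a − c), for the π/2 rotation M, t > 0, and r < t·l, does not intersect the line through a and b. -/
open scoped RealInnerProductSpace

set_option maxHeartbeats 1000000 in
theorem disk_misses_edge_line
    (M : EuclideanSpace ℝ (Fin 2) → EuclideanSpace ℝ (Fin 2))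
    (hM : ∀ u : EuclideanSpace ℝ (Fin 2), M u = ![u 1, -u 0])
    (a b c : EuclideanSpace ℝ (Fin 2)) (hac : a ≠ c)
    (l : ℝ) (hl : 0 < l)
    (hobtuse : ⟪a - c, b - a⟫ < -l * ‖b - a‖)
    (t r : ℝ) (ht : 0 < t) (hr : r < t * l) :
    ∀ x ∈ Metric.ball (a + t • M (a - c)) r,
      x ∉ affineSpan ℝ ({a, b} : Set (EuclideanSpace ℝ (Fin 2))) := by
  intro x hx hxline
  set u : EuclideanSpace ℝ (Fin 2) := a - c with hu
  set v : EuclideanSpace ℝ (Fin 2) := b - a with hv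
  -- obtain s with x - a = s • v
  have hmem : x -ᵥ a ∈ vectorSpan ℝ ({a, b} : Set (EuclideanSpace ℝ (Fin 2))) := by
    rw [← direction_affineSpan]
    exact AffineSubspace.vsub_mem_direction hxline (left_mem_affineSpan_pair ℝ a b)
  rw [mem_vectorSpan_pair_rev] at hmem
  obtain ⟨s, hs⟩ := hmem
  have hsx : x - a = s • v := by
    rw [hv]
    simpa [vsub_eq_sub] using hs.symm
  -- key inner product computations
  have hMuMv : ⟪M u, M v⟫ = ⟪u, v⟫ := by
    simp only [PiLp.inner_apply, hM]
    simp only [PiLp.inner_apply, RCLike.inner_apply, starRingEnd_apply, star_trivial,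
      Fin.sum_univ_two, Matrix.cons_val_zero, Matrix.cons_val_one, Matrix.head_cons]
    ring
  have hvMv : ⟪v, M v⟫ = 0 := by
    simp only [PiLp.inner_apply, hM]
    simp only [PiLp.inner_apply, RCLike.inner_apply, starRingEnd_apply, star_trivial,
      Fin.sum_univ_two, Matrix.cons_val_zero, Matrix.cons_val_one, Matrix.head_cons]
    ring_nf
  have hnMv : ‖M v‖ = ‖v‖ := by
    have h1 : ⟪M v, M v⟫ = ⟪v, v⟫ := by
      simp only [PiLp.inner_apply, hM]
      simp only [PiLp.inner_apply, RCLike.inner_apply, starRingEnd_apply, star_trivial,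
        Fin.sum_univ_two, Matrix.cons_val_zero, Matrix.cons_val_one, Matrix.head_cons]
      ring
    rw [real_inner_self_eq_norm_sq, real_inner_self_eq_norm_sq] at h1
    nlinarith [norm_nonneg (M v), norm_nonneg v]
  -- v ≠ 0
  have hvnorm : 0 < ‖v‖ := by
    rcases eq_or_ne v 0 with h | h
    · rw [h] at hobtuse; simp at hobtuse
    · exact norm_pos_iff.mpr h
  -- x - center
  have hdiff : x - (a + t • M u) = s • v - t • M u := by
    rw [show x - (a + t • M u) = (x - a) - t • M u by abel, hsx]
  -- inner of difference with M v
  have hinner : ⟪x - (a + t • M u), M v⟫ = -(t * ⟪u, v⟫) := by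
    rw [hdiff, inner_sub_left, real_inner_smul_left, real_inner_smul_left, hvMv, hMuMv]
    ring
  -- Cauchy-Schwarz
  have hcs : |⟪x - (a + t • M u), M v⟫| ≤ ‖x - (a + t • M u)‖ * ‖M v‖ :=
    abs_real_inner_le_norm _ _
  have hdist : ‖x - (a + t • M u)‖ < r := by
    rw [Metric.mem_ball, dist_eq_norm] at hx
    exact hx
  have huv : ⟪u, v⟫ < -l * ‖v‖ := hobtuse
  have huvneg : ⟪u, v⟫ < 0 := by nlinarith [mul_pos hl hvnorm]
  have habs : |⟪x - (a + t • M u), M v⟫| = t * (-⟪u, v⟫) := by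
    rw [hinner, abs_of_nonneg]
    · ring
    · nlinarith [mul_pos ht (neg_pos.mpr huvneg)]
  rw [habs, hnMv] at hcs
  nlinarith [norm_nonneg (x - (a + t • M u))]
end
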